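/- Let G be a finite simple graph on n ≥ 2 vertices, let Ḡ denote its complement, and let k ≥ 0 be an integer. Then 3 ≤ α_{k-reg}(G) + α_{k-reg}(Ḡ) ≤ 2n and 2 ≤ α_{k-reg}(G) · α_{k-reg}(Ḡ) ≤ n². -/
import Mathlib


open SimpleGraph

/-- The degree of a vertex `v` in `G`: the number of neighbors of `v`. -/
noncomputable def degN {V : Type*} (G : SimpleGraph V) (v : V) : ℕ := {u | G.Adj v u}.ncard

/-- A set of vertices is `k`-independent if the induced subgraph has maximum degree at
most `k`, i.e. every vertex of the set has at most `k` neighbors inside the set. -/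
def IsKIndepSet {V : Type*} (G : SimpleGraph V) (k : ℕ) (S : Set V) : Prop :=
  ∀ v ∈ S, {u | u ∈ S ∧ G.Adj v u}.ncard ≤ k

/-- A set of vertices is regular if all its vertices have the same degree in `G`. -/
def IsRegularSet {V : Type*} (G : SimpleGraph V) (S : Set V) : Prop :=
  ∀ u ∈ S, ∀ v ∈ S, degN G u = degN G v

/-- The regular `k`-independence number `α_{k-reg}(G)`: the maximum cardinality of a set
of vertices that is both `k`-independent and regular. -/
noncomputable def regKIndepNum {V : Type*} (G : SimpleGraph V) (k : ℕ) : ℕ :=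
  sSup {m : ℕ | ∃ S : Set V, S.ncard = m ∧ IsKIndepSet G k S ∧ IsRegularSet G S}

lemma degN_eq_degree {V : Type*} [Fintype V] (G : SimpleGraph V) [DecidableRel G.Adj]
    (v : V) : degN G v = G.degree v := by
  classical
  have : {u | G.Adj v u} = (G.neighborSet v : Set V) := rfl
  rw [degN, this, Set.ncard_eq_toFinset_card', ← SimpleGraph.neighborFinset_def]
  rfl

lemma exists_same_degree {V : Type*} [Fintype V] (G : SimpleGraph V)
    (hn : 2 ≤ Fintype.card V) : ∃ u v : V, u ≠ v ∧ degN G u = degN G v := by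
  classical
  by_contra h
  push_neg at h
  have hinj : Function.Injective fun v => degN G v := by
    intro a b hab
    by_contra hne
    exact (h a b hne) hab
  -- degrees are < card V
  have hlt : ∀ v, degN G v < Fintype.card V := by
    intro v
    rw [degN_eq_degree]
    exact G.degree_lt_card_verts v
  set n := Fintype.card V with hn'
  have hNe : Nonempty V := Fintype.card_pos_iff.mp (by omega)
  let f : V → Fin n := fun v => ⟨degN G v, hlt v⟩
  have hfinj : Function.Injective f := fun a b hab => hinj (by simpa [f] using congrArg Fin.val hab)
  have hsurj : Function.Surjective f :=
    ((Fintype.bijective_iff_injective_and_card f).mpr ⟨hfinj, by simp [hn']⟩).2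
  obtain ⟨v, hv⟩ := hsurj ⟨n - 1, by omega⟩
  obtain ⟨w, hw⟩ := hsurj ⟨0, by omega⟩
  have hv' : G.degree v = n - 1 := by
    have := congrArg Fin.val hv; simpa [f, degN_eq_degree] using this
  have hw' : G.degree w = 0 := by
    have := congrArg Fin.val hw; simpa [f, degN_eq_degree] using this
  have hvw : v ≠ w := by
    intro h'; rw [h', hw'] at hv'; omega
  -- v is adjacent to w
  have hsub : G.neighborFinset v ⊆ Finset.univ.erase v := by
    intro x hx
    simp only [Finset.mem_erase, Finset.mem_univ, and_true]
    exact fun hxv => G.irrefl (hxv ▸ (SimpleGraph.mem_neighborFinset G v x).mp hx)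
  have hcard : (Finset.univ.erase v).card = n - 1 := by
    rw [Finset.card_erase_of_mem (Finset.mem_univ v), Finset.card_univ]
  have heq : G.neighborFinset v = Finset.univ.erase v := by
    apply Finset.eq_of_subset_of_card_le hsub
    rw [hcard, ← hv']; rfl
  have hadj : G.Adj v w := by
    have : w ∈ G.neighborFinset v := by
      rw [heq]; simp [hvw.symm]
    exact (SimpleGraph.mem_neighborFinset G v w).mp this
  have : 0 < G.degree w := G.degree_pos_iff_exists_adj w |>.mpr ⟨v, hadj.symm⟩
  omega

lemma bddAbove_regSet {V : Type*} [Fintype V] (G : SimpleGraph V) (k : ℕ) :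
    BddAbove {m : ℕ | ∃ S : Set V, S.ncard = m ∧ IsKIndepSet G k S ∧ IsRegularSet G S} := by
  refine ⟨Fintype.card V, ?_⟩
  rintro m ⟨S, rfl, -, -⟩
  simpa [Set.ncard_univ, Nat.card_eq_fintype_card] using
    Set.ncard_le_ncard (Set.subset_univ S) (Set.finite_univ)

lemma regKIndepNum_le {V : Type*} [Fintype V] (G : SimpleGraph V) (k : ℕ) :
    regKIndepNum G k ≤ Fintype.card V := by
  refine csSup_le ⟨0, ∅, by simp, fun v hv => absurd hv (Set.notMem_empty v),
    fun u hu hw hw' => absurd hu (Set.notMem_empty u)⟩ ?_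
  rintro m ⟨S, rfl, -, -⟩
  simpa [Set.ncard_univ, Nat.card_eq_fintype_card] using
    Set.ncard_le_ncard (Set.subset_univ S) (Set.finite_univ)

lemma one_le_regKIndepNum {V : Type*} [Fintype V] [Nonempty V] (G : SimpleGraph V) (k : ℕ) :
    1 ≤ regKIndepNum G k := by
  obtain ⟨v⟩ := ‹Nonempty V›
  apply le_csSup (bddAbove_regSet G k)
  refine ⟨{v}, by simp, ?_, ?_⟩
  · intro x hx
    have : {u | u ∈ ({v} : Set V) ∧ G.Adj x u} = ∅ := by
      ext u
      simp only [Set.mem_setOf_eq, Set.mem_singleton_iff, Set.mem_empty_iff_false, iff_false]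
      rintro ⟨rfl, hadj⟩
      exact G.irrefl (hx ▸ hadj)
    rw [this]
    simp
  · rintro a ha b hb
    simp only [Set.mem_singleton_iff] at ha hb
    rw [ha, hb]

lemma two_le_regKIndepNum {V : Type*} [Fintype V] (G : SimpleGraph V) (k : ℕ)
    {u v : V} (hne : u ≠ v) (hnadj : ¬ G.Adj u v) (hdeg : degN G u = degN G v) :
    2 ≤ regKIndepNum G k := by
  apply le_csSup (bddAbove_regSet G k)
  refine ⟨{u, v}, Set.ncard_pair hne, ?_, ?_⟩
  · intro x hx
    have : {w | w ∈ ({u, v} : Set V) ∧ G.Adj x w} = ∅ := by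
      ext w
      simp only [Set.mem_setOf_eq, Set.mem_insert_iff, Set.mem_singleton_iff,
        Set.mem_empty_iff_false, iff_false, not_and]
      rcases hx with rfl | hx
      · rintro (rfl | rfl) hadj
        · exact G.irrefl hadj
        · exact hnadj hadj
      · rw [Set.mem_singleton_iff] at hx; subst hx
        rintro (rfl | rfl) hadj
        · exact hnadj hadj.symm
        · exact G.irrefl hadj
    rw [this]
    simp
  · rintro a ha b hb
    rcases ha with rfl | ha <;> rcases hb with rfl | hb <;>
      simp_all [Set.mem_singleton_iff]


/-- Nordhaus–Gaddum bounds: for a graph `G` on `n ≥ 2` vertices,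
`3 ≤ α_{k-reg}(G) + α_{k-reg}(Ḡ) ≤ 2n` and `2 ≤ α_{k-reg}(G) · α_{k-reg}(Ḡ) ≤ n²`. -/
theorem stmt_18 {V : Type*} [Fintype V] (G : SimpleGraph V) (k : ℕ)
    (hn : 2 ≤ Fintype.card V) :
    (3 ≤ regKIndepNum G k + regKIndepNum Gᶜ k ∧
      regKIndepNum G k + regKIndepNum Gᶜ k ≤ 2 * Fintype.card V) ∧
    (2 ≤ regKIndepNum G k * regKIndepNum Gᶜ k ∧
      regKIndepNum G k * regKIndepNum Gᶜ k ≤ Fintype.card V ^ 2) := by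
  classical
  have hNe : Nonempty V := Fintype.card_pos_iff.mp (by omega)
  obtain ⟨u, v, hne, hdeg⟩ := exists_same_degree G hn
  have hdegc : degN Gᶜ u = degN Gᶜ v := by
    rw [degN_eq_degree, degN_eq_degree, SimpleGraph.degree_compl, SimpleGraph.degree_compl]
    rw [degN_eq_degree, degN_eq_degree] at hdeg
    rw [hdeg]
  have key : 2 ≤ regKIndepNum G k ∨ 2 ≤ regKIndepNum Gᶜ k := by
    by_cases hadj : G.Adj u v
    · right
      exact two_le_regKIndepNum Gᶜ k hne (by simp [hadj]) hdegc
    · left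
      exact two_le_regKIndepNum G k hne hadj hdeg
  have h1 := one_le_regKIndepNum G k
  have h1c := one_le_regKIndepNum Gᶜ k
  have hle := regKIndepNum_le G k
  have hlec := regKIndepNum_le Gᶜ k
  refine ⟨⟨?_, by omega⟩, ⟨?_, ?_⟩⟩
  · rcases key with h | h <;> omega
  · rcases key with h | h
    · calc 2 = 2 * 1 := rfl
        _ ≤ regKIndepNum G k * regKIndepNum Gᶜ k := Nat.mul_le_mul h h1c
    · calc 2 = 1 * 2 := rfl
        _ ≤ regKIndepNum G k * regKIndepNum Gᶜ k := Nat.mul_le_mul h1 h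
  · rw [pow_two]; exact Nat.mul_le_mul hle hlec
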